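/- arXiv:1011.4609 — 3 statements merged into one kernel-verified Lean document; each statement's English description precedes it below -/
import Mathlib

section
/- If k ≥ (2+ε)·log_σ n for a positive constant ε, then with probability at least 1 − 1/n^ε, a uniformly random σ-ary string s of length n satisfies H_k(s) = 0. -/
open scoped Classical
open Finset Real Filter

noncomputable section

/-- Zeroth-order empirical entropy of a multiset of characters (base-2 bits per character). -/
def H0M {A : Type*} [Fintype A] (t : Multiset A) : ℝ :=
  (1 / (Multiset.card t : ℝ)) *
    ∑ a : A, (t.count a : ℝ) * Real.logb 2 ((Multiset.card t : ℝ) / (t.count a : ℝ))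

/-- Zeroth-order empirical entropy of a string `s` of length `n`. -/
def H0F {A : Type*} [Fintype A] {n : ℕ} (s : Fin n → A) : ℝ :=
  H0M (Multiset.map s Finset.univ.val)

/-- The context string `s_α`: the multiset of characters immediately following
occurrences of the `k`-tuple `α` in `s`. -/
def ctxF {A : Type*} [Fintype A] {n : ℕ} (k : ℕ) (s : Fin n → A) (α : Fin k → A) : Multiset A :=
  Multiset.map (fun i : Fin n => s ⟨min ((i : ℕ) + k) (n - 1), by have := i.isLt; omega⟩)
    ((Finset.univ.filter (fun i : Fin n =>
      (i : ℕ) + k < n ∧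
        ∀ t : Fin k, s ⟨min ((i : ℕ) + (t : ℕ)) (n - 1), by have := i.isLt; omega⟩ = α t)).val)

/-- `k`-th order empirical entropy of a string `s` of length `n`. -/
def HkF {A : Type*} [Fintype A] {n : ℕ} (k : ℕ) (s : Fin n → A) : ℝ :=
  (1 / (n : ℝ)) * ∑ α : Fin k → A, (Multiset.card (ctxF k s α) : ℝ) * H0M (ctxF k s α)

/-- The `k`-tuples of `s` starting at positions `i` and `j` both fit in `s` and coincide. -/
def MatchAt {A : Type*} {n : ℕ} (s : Fin n → A) (k i j : ℕ) : Prop :=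
  i + k ≤ n ∧ j + k ≤ n ∧
    ∀ t, t < k → ∀ (hi : i + t < n) (hj : j + t < n), s ⟨i + t, hi⟩ = s ⟨j + t, hj⟩

/-- `s` contains two matching `k`-tuples. -/
def HasMatch {A : Type*} {n : ℕ} (k : ℕ) (s : Fin n → A) : Prop :=
  ∃ i j : ℕ, i < j ∧ MatchAt s k i j

/-!
A string with no two equal `k`-tuples has every context string of length at most one, so all
its `k`-th order contexts have zero entropy and `H_k(s) = 0`. A match between positions
`i < j` determines the `k` characters at `j, …, j + k - 1` from earlier ones, so at most
`σ ^ (n - k)` strings match at a given pair; summing over fewer than `n ^ 2` pairs, the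
probability of a match is at most `n ^ 2 / σ ^ k ≤ n ^ (-ε)`.
-/

lemma H0M_eq_zero_of_card_le_one {A : Type*} [Fintype A] {t : Multiset A}
    (h : Multiset.card t ≤ 1) : H0M t = 0 := by
  unfold H0M
  rw [Finset.sum_eq_zero, mul_zero]
  intro a _
  have hcount : t.count a ≤ Multiset.card t := Multiset.count_le_card a t
  rcases Nat.le_one_iff_eq_zero_or_eq_one.mp (hcount.trans h) with h0 | h1
  · simp [h0]
  · have : Multiset.card t = 1 := le_antisymm h (h1 ▸ hcount)
    simp [this, h1]

section Matching

variable {A : Type*} {n k : ℕ}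

/-- Two occurrences of the same `k`-tuple, as recorded by `ctxF`, form a match. -/
lemma matchAt_of_eq_tuple {s : Fin n → A} {α : Fin k → A} {i j : Fin n}
    (hi : (i : ℕ) + k < n ∧
      ∀ t : Fin k, s ⟨min ((i : ℕ) + (t : ℕ)) (n - 1), by have := i.isLt; omega⟩ = α t)
    (hj : (j : ℕ) + k < n ∧
      ∀ t : Fin k, s ⟨min ((j : ℕ) + (t : ℕ)) (n - 1), by have := j.isLt; omega⟩ = α t) :
    MatchAt s k i j := by
  refine ⟨hi.1.le, hj.1.le, fun t ht hit hjt => ?_⟩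
  have eq_i := hi.2 ⟨t, ht⟩
  have eq_j := hj.2 ⟨t, ht⟩
  simp only [show min ((i : ℕ) + t) (n - 1) = i + t by omega,
    show min ((j : ℕ) + t) (n - 1) = j + t by omega] at eq_i eq_j
  rw [eq_i, eq_j]

lemma card_ctxF_le_one_of_not_hasMatch [Fintype A] {s : Fin n → A} (h : ¬ HasMatch k s)
    (α : Fin k → A) : Multiset.card (ctxF k s α) ≤ 1 := by
  rw [ctxF, Multiset.card_map, Finset.card_val, Finset.card_le_one]
  intro i hi j hj
  simp only [Finset.mem_filter, Finset.mem_univ, true_and] at hi hj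
  by_contra hij
  rcases lt_or_gt_of_ne (Fin.val_ne_of_ne hij) with hlt | hlt
  · exact h ⟨i, j, hlt, matchAt_of_eq_tuple hi hj⟩
  · exact h ⟨j, i, hlt, matchAt_of_eq_tuple hj hi⟩

lemma HkF_eq_zero_of_not_hasMatch [Fintype A] {s : Fin n → A} (h : ¬ HasMatch k s) :
    HkF k s = 0 := by
  unfold HkF
  rw [Finset.sum_eq_zero, mul_zero]
  intro α _
  rw [H0M_eq_zero_of_card_le_one (card_ctxF_le_one_of_not_hasMatch h α), mul_zero]

/-- Inside `[j, j + k)` a match copies the character `j - i` positions earlier, so strong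
induction on the position applies. -/
lemma eq_of_matchAt_of_eq_outside {s s' : Fin n → A} {i j : ℕ} (hij : i < j)
    (hs : MatchAt s k i j) (hs' : MatchAt s' k i j)
    (hout : ∀ m (hm : m < n), m < j ∨ j + k ≤ m → s ⟨m, hm⟩ = s' ⟨m, hm⟩) : s = s' := by
  funext ⟨m, hm⟩
  induction m using Nat.strong_induction_on with
  | _ m ih =>
    by_cases hm_out : m < j ∨ j + k ≤ m
    · exact hout m hm hm_out
    have hi : i + (m - j) < n := by omega
    have hj : j + (m - j) < n := by omega
    have hcopy : ∀ u : Fin n → A, MatchAt u k i j → u ⟨m, hm⟩ = u ⟨i + (m - j), hi⟩ := by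
      intro u hu
      rw [hu.2.2 (m - j) (by omega) hi hj]
      congr 1
      ext
      simp only
      omega
    rw [hcopy s hs, hcopy s' hs']
    exact ih _ (by omega) hi

lemma card_filter_matchAt_mul_pow_le [Fintype A] {i j : ℕ} (hij : i < j) :
    (Finset.univ.filter (fun s : Fin n → A => MatchAt s k i j)).card * Fintype.card A ^ k
      ≤ Fintype.card A ^ n := by
  by_cases hjk : j + k ≤ n
  swap
  · have hempty : Finset.univ.filter (fun s : Fin n → A => MatchAt s k i j) = ∅ :=
      Finset.filter_false_of_mem fun s _ hs => hjk hs.2.1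
    simp [hempty]
  let outside : Fin (n - k) → Fin n := fun x =>
    ⟨if (x : ℕ) < j then x else x + k, by split <;> omega⟩
  have hcover : ∀ m (hm : m < n), m < j ∨ j + k ≤ m → ∃ x, outside x = ⟨m, hm⟩ := by
    rintro m hm (hmj | hmj)
    · exact ⟨⟨m, by omega⟩, Fin.ext (by simp [outside, hmj])⟩
    · exact ⟨⟨m - k, by omega⟩, Fin.ext (by simp [outside, show ¬ m - k < j by omega]; omega)⟩
  have hcard : (Finset.univ.filter (fun s : Fin n → A => MatchAt s k i j)).card
      ≤ Fintype.card A ^ (n - k) := by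
    calc _ ≤ (Finset.univ : Finset (Fin (n - k) → A)).card := by
          refine Finset.card_le_card_of_injOn (fun s => s ∘ outside)
            (fun _ _ => Finset.mem_coe.mpr (Finset.mem_univ _)) ?_
          intro s hs s' hs' heq
          simp only [Finset.coe_filter, Finset.mem_univ, true_and, Set.mem_ofPred_eq] at hs hs'
          refine eq_of_matchAt_of_eq_outside hij hs hs' fun m hm hm_out => ?_
          obtain ⟨x, hx⟩ := hcover m hm hm_out
          simpa [hx] using congrFun heq x
      _ = Fintype.card A ^ (n - k) := by simp
  calc _ ≤ Fintype.card A ^ (n - k) * Fintype.card A ^ k := Nat.mul_le_mul_right _ hcard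
    _ = Fintype.card A ^ n := by rw [← pow_add, Nat.sub_add_cancel (by omega)]

lemma card_filter_hasMatch_mul_pow_le [Fintype A] :
    (Finset.univ.filter (fun s : Fin n → A => HasMatch k s)).card * Fintype.card A ^ k
      ≤ n ^ 2 * Fintype.card A ^ n := by
  -- A pair `(i, j')` stands for a match at `i < j' + 1`: when `k = 0` a match may start at `n`.
  let pairs := Finset.univ.filter (fun p : Fin n × Fin n => p.1 ≤ p.2)
  have hsub : Finset.univ.filter (fun s : Fin n → A => HasMatch k s)
      ⊆ pairs.biUnion fun p => Finset.univ.filter fun s => MatchAt s k p.1 (p.2 + 1) := by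
    intro s hs
    obtain ⟨i, j, hij, hm⟩ := (Finset.mem_filter.mp hs).2
    simp only [Finset.mem_biUnion, Finset.mem_filter, Finset.mem_univ, true_and, pairs]
    have hj : j - 1 < n := by have := hm.2.1; omega
    refine ⟨(⟨i, by omega⟩, ⟨j - 1, hj⟩), Nat.le_sub_one_of_lt hij, ?_⟩
    rwa [Nat.sub_add_cancel (by omega)]
  have hpairs : pairs.card ≤ n ^ 2 := by
    calc pairs.card ≤ (Finset.univ : Finset (Fin n × Fin n)).card := Finset.card_filter_le _ _
      _ = n ^ 2 := by simp [sq]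
  calc _ ≤ (∑ p ∈ pairs, (Finset.univ.filter fun s : Fin n → A => MatchAt s k p.1 (p.2 + 1)).card)
          * Fintype.card A ^ k :=
        Nat.mul_le_mul_right _ ((Finset.card_le_card hsub).trans Finset.card_biUnion_le)
    _ ≤ pairs.card * Fintype.card A ^ n := by
        rw [Finset.sum_mul, ← smul_eq_mul]
        exact Finset.sum_le_card_nsmul _ _ _ fun p hp =>
          card_filter_matchAt_mul_pow_le (Nat.lt_succ_of_le (Finset.mem_filter.mp hp).2)
    _ ≤ n ^ 2 * Fintype.card A ^ n := Nat.mul_le_mul_right _ hpairs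

end Matching

lemma one_sub_div_le_card_filter_not_hasMatch_div {A : Type*} [Fintype A] [Nonempty A]
    (n k : ℕ) :
    1 - (n : ℝ) ^ 2 / (Fintype.card A : ℝ) ^ k
      ≤ ((Finset.univ.filter (fun s : Fin n → A => ¬ HasMatch k s)).card : ℝ)
          / (Fintype.card (Fin n → A) : ℝ) := by
  have hσ : 0 < (Fintype.card A : ℝ) := by exact_mod_cast Fintype.card_pos
  have htotal : (Fintype.card (Fin n → A) : ℝ) = (Fintype.card A : ℝ) ^ n := by simp
  have hsplit : ((Finset.univ.filter (fun s : Fin n → A => HasMatch k s)).card : ℝ)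
      + (Finset.univ.filter (fun s : Fin n → A => ¬ HasMatch k s)).card
      = (Fintype.card A : ℝ) ^ n := by
    rw [← htotal, ← Finset.card_univ]
    exact_mod_cast Finset.card_filter_add_card_filter_not _
  have hmatch : ((Finset.univ.filter (fun s : Fin n → A => HasMatch k s)).card : ℝ)
      ≤ (n : ℝ) ^ 2 / (Fintype.card A : ℝ) ^ k * (Fintype.card A : ℝ) ^ n := by
    rw [div_mul_eq_mul_div, le_div_iff₀ (by positivity)]
    exact_mod_cast card_filter_hasMatch_mul_pow_le
  rw [htotal, le_div_iff₀ (by positivity)]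
  linarith

lemma sq_div_pow_le_one_div_rpow {b x ε : ℝ} {k : ℕ} (hb : 1 < b) (hx : 0 ≤ x)
    (hk : (2 + ε) * Real.logb b x ≤ k) : x ^ 2 / b ^ k ≤ 1 / x ^ ε := by
  rcases hx.eq_or_lt with rfl | hx
  · simp only [ne_eq, OfNat.ofNat_ne_zero, not_false_eq_true, zero_pow, zero_div]
    positivity
  have hb0 : 0 < b := by linarith
  rw [div_le_div_iff₀ (by positivity) (by positivity), one_mul, ← Real.rpow_two,
    ← Real.rpow_add hx]
  calc x ^ (2 + ε) = b ^ ((2 + ε) * Real.logb b x) := by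
        rw [mul_comm, Real.rpow_mul hb0.le, Real.rpow_logb hb0 hb.ne' hx]
    _ ≤ b ^ (k : ℝ) := Real.rpow_le_rpow_of_exponent_le hb.le hk
    _ = b ^ k := Real.rpow_natCast b k

theorem prob_Hk_zero_ge_general {A : Type*} [Fintype A] {σ n k : ℕ}
    (hσ : Fintype.card A = σ) (hσ2 : 2 ≤ σ) {ε : ℝ}
    (hk : (2 + ε) * Real.logb σ n ≤ (k : ℝ)) :
    1 - 1 / (n : ℝ) ^ ε
      ≤ ((Finset.univ.filter (fun s : Fin n → A => HkF k s = 0)).card : ℝ)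
          / (Fintype.card (Fin n → A) : ℝ) := by
  have : Nonempty A := Fintype.card_pos_iff.mp (by omega)
  have hσ1 : (1 : ℝ) < σ := by exact_mod_cast hσ2
  calc 1 - 1 / (n : ℝ) ^ ε ≤ 1 - (n : ℝ) ^ 2 / (Fintype.card A : ℝ) ^ k := by
        rw [hσ]
        exact sub_le_sub_left (sq_div_pow_le_one_div_rpow hσ1 n.cast_nonneg hk) 1
    _ ≤ ((Finset.univ.filter (fun s : Fin n → A => ¬ HasMatch k s)).card : ℝ)
          / (Fintype.card (Fin n → A) : ℝ) := one_sub_div_le_card_filter_not_hasMatch_div n k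
    _ ≤ _ := by
        gcongr with s
        exact HkF_eq_zero_of_not_hasMatch

/-- If `k ≥ (2+ε)·log_σ n` with `ε > 0`, then with probability at least
`1 - 1/n^ε` a uniformly random σ-ary string `s` of length `n` has `H_k(s) = 0`. -/
theorem prob_Hk_zero_ge {A : Type*} [Fintype A] {σ n k : ℕ}
    (hσ : Fintype.card A = σ) (hσ2 : 2 ≤ σ) {ε : ℝ} (hε : 0 < ε)
    (hk : (2 + ε) * Real.logb σ n ≤ (k : ℝ)) :
    1 - 1 / (n : ℝ) ^ ε
      ≤ ((Finset.univ.filter (fun s : Fin n → A => HkF k s = 0)).card : ℝ)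
          / (Fintype.card (Fin n → A) : ℝ) :=
  prob_Hk_zero_ge_general hσ hσ2 hk

end
end

section
/- Any algorithm distinguishing a deterministic k-th order Markov source from an unbiased memoryless source on alphabet size σ with success probability at least 2/3 on both must read Ω(σ^{k/2}) characters; concretely, if it reads m characters with m ≤ σ^{k/2}/10, it cannot be correct with probability at least 2/3 on every source of both types. -/
open scoped Classical
open Finset Real Filter

noncomputable section

/-- `s` is generated by a deterministic `k`-th order Markov source: a function
`f : A^k → A` with `s(i+k) = f(s(i),…,s(i+k-1))` for all valid `i`. -/
def GenByMarkov {A : Type*} {n : ℕ} (k : ℕ) (s : Fin n → A) : Prop :=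
  ∃ f : (Fin k → A) → A, ∀ i : ℕ, ∀ (hik : i + k < n),
    f (fun t => s ⟨i + (t : ℕ), by have := t.isLt; omega⟩) = s ⟨i + k, hik⟩


/-!
A uniform string of length `m` contains a repeated `k`-tuple with probability at most
`m (m + 1) / σ^k ≤ 1/50`, by a union bound over the pairs of starting positions. A string with
no repeated `k`-tuple is produced by a deterministic `k`-th order Markov source (each context
occurs at most once, so the next character can be prescribed freely). Hence a test that says
"memoryless" with probability at most `1/3` on every Markov string says it with probability
below `2/3` on uniform input.
-/

section

variable {A : Type*} {m k : ℕ}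

theorem genByMarkov_of_not_hasMatch [Nonempty A] {s : Fin m → A} (h : ¬ HasMatch k s) :
    GenByMarkov k s := by
  let window : {i : ℕ // i + k < m} → Fin k → A := fun i t => s ⟨i + t, by omega⟩
  have hinj : window.Injective := by
    rintro ⟨i, hi⟩ ⟨j, hj⟩ hw
    have hmatch : ∀ t < k, ∀ (hi : i + t < m) (hj : j + t < m),
        s ⟨i + t, hi⟩ = s ⟨j + t, hj⟩ := fun t ht _ _ => congrFun hw ⟨t, ht⟩
    rcases lt_trichotomy i j with hij | rfl | hij
    · exact absurd ⟨i, j, hij, by omega, by omega, hmatch⟩ h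
    · rfl
    · exact absurd
        ⟨j, i, hij, by omega, by omega, fun t ht hj hi => (hmatch t ht hi hj).symm⟩ h
  exact ⟨Function.extend window (fun i => s ⟨i + k, i.2⟩) (fun _ => Classical.arbitrary A),
    fun i hik => hinj.extend_apply _ _ ⟨i, hik⟩⟩

theorem eq_of_matchAt_of_eq_off_window {s s' : Fin m → A} {i j : ℕ} (hij : i < j)
    (hs : MatchAt s k i j) (hs' : MatchAt s' k i j)
    (hoff : ∀ p : Fin m, (p : ℕ) < j ∨ j + k ≤ p → s p = s' p) : s = s' := by
  funext ⟨n, hn⟩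
  induction n using Nat.strong_induction_on with
  | _ n ih =>
    by_cases hn' : n < j ∨ j + k ≤ n
    · exact hoff _ hn'
    · have hs_n : s ⟨n, hn⟩ = s ⟨i + (n - j), by omega⟩ := by
        rw [hs.2.2 (n - j) (by omega) (by omega) (by omega)]; congr; omega
      have hs'_n : s' ⟨n, hn⟩ = s' ⟨i + (n - j), by omega⟩ := by
        rw [hs'.2.2 (n - j) (by omega) (by omega) (by omega)]; congr; omega
      rw [hs_n, hs'_n, ih _ (by omega)]

theorem card_matchAt_mul_le [Fintype A] {i j : ℕ} (hij : i < j) :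
    #{s : Fin m → A | MatchAt s k i j} * Fintype.card A ^ k ≤ Fintype.card A ^ m := by
  by_cases hjk : j + k ≤ m
  · let skip : Fin (m - k) → Fin m := fun q =>
      if (q : ℕ) < j then ⟨q, by omega⟩ else ⟨q + k, by omega⟩
    have hinj : Set.InjOn (fun s : Fin m → A => s ∘ skip)
        (({s | MatchAt s k i j} : Finset (Fin m → A)) : Set (Fin m → A)) := by
      intro s hs s' hs' hss'
      simp only [coe_filter, mem_univ, true_and, Set.mem_ofPred_eq] at hs hs'
      refine eq_of_matchAt_of_eq_off_window hij hs hs' fun p hp => ?_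
      obtain ⟨q, rfl⟩ : ∃ q, skip q = p := by
        rcases hp with hp | hp
        · exact ⟨⟨p, by omega⟩, by simp [skip, hp]⟩
        · refine ⟨⟨p - k, by omega⟩, ?_⟩
          ext
          simp only [skip, if_neg (show ¬ p - k < j by omega)]
          omega
      exact congrFun hss' q
    have hcard : #{s : Fin m → A | MatchAt s k i j} ≤ Fintype.card A ^ (m - k) := by
      simpa using card_le_card_of_injOn _ (fun s _ => mem_univ (s ∘ skip)) hinj
    calc #{s : Fin m → A | MatchAt s k i j} * Fintype.card A ^ k
        ≤ Fintype.card A ^ (m - k) * Fintype.card A ^ k := Nat.mul_le_mul_right _ hcard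
      _ = Fintype.card A ^ m := by rw [← pow_add, Nat.sub_add_cancel (by omega)]
  · have : #{s : Fin m → A | MatchAt s k i j} = 0 := by
      simp only [card_eq_zero, filter_eq_empty_iff]
      exact fun s _ hs => hjk hs.2.1
    simp [this]

theorem card_hasMatch_mul_le [Fintype A] :
    #{s : Fin m → A | HasMatch k s} * Fintype.card A ^ k
      ≤ m * (m + 1) * Fintype.card A ^ m := by
  let pairs := {p ∈ range m ×ˢ range (m + 1) | p.1 < p.2}
  have hsub : ({s | HasMatch k s} : Finset (Fin m → A))
      ⊆ pairs.biUnion fun p => {s | MatchAt s k p.1 p.2} := by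
    intro s hs
    obtain ⟨i, j, hij, hmatch⟩ := (mem_filter.mp hs).2
    have := hmatch.2.1
    simp only [pairs, mem_biUnion, mem_filter, mem_product, mem_range, mem_univ, true_and]
    exact ⟨(i, j), ⟨⟨by omega, by omega⟩, hij⟩, hmatch⟩
  calc #{s : Fin m → A | HasMatch k s} * Fintype.card A ^ k
      ≤ (∑ p ∈ pairs, #{s : Fin m → A | MatchAt s k p.1 p.2}) * Fintype.card A ^ k :=
        Nat.mul_le_mul_right _ ((card_le_card hsub).trans card_biUnion_le)
    _ = ∑ p ∈ pairs, #{s : Fin m → A | MatchAt s k p.1 p.2} * Fintype.card A ^ k := sum_mul ..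
    _ ≤ ∑ _p ∈ pairs, Fintype.card A ^ m :=
        sum_le_sum fun p hp => card_matchAt_mul_le (mem_filter.mp hp).2
    _ ≤ m * (m + 1) * Fintype.card A ^ m := by
        rw [sum_const, smul_eq_mul]
        refine Nat.mul_le_mul_right _ ((card_filter_le _ _).trans ?_)
        simp

theorem card_le_two_mul_card_of_average_ge {ι : Type*} [Fintype ι] (g : ι → ℝ)
    (S : Finset ι)
    (hg : ∀ x, g x ≤ 1) (hgS : ∀ x ∉ S, g x ≤ 1 / 3)
    (havg : 2 / 3 ≤ (1 / (Fintype.card ι : ℝ)) * ∑ x, g x) :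
    (Fintype.card ι : ℝ) ≤ 2 * #S := by
  have hpos : (0 : ℝ) < Fintype.card ι := by
    by_contra! h
    norm_num [le_antisymm h (Nat.cast_nonneg _)] at havg
  have hsum : ∑ x, g x ≤ #S + (Fintype.card ι - #S) / 3 := by
    rw [← sum_add_sum_compl S]
    have hS : ∑ x ∈ S, g x ≤ #S := by simpa using sum_le_sum fun x (_ : x ∈ S) => hg x
    have hSc : ∑ x ∈ Sᶜ, g x ≤ #Sᶜ * (1 / 3) := by
      simpa using sum_le_sum fun x (hx : x ∈ Sᶜ) => hgS x (mem_compl.mp hx)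
    rw [card_compl, Nat.cast_sub (card_le_univ S)] at hSc
    linarith
  rw [one_div, inv_mul_eq_div, le_div_iff₀ hpos] at havg
  linarith

theorem sq_le_pow_of_le_rpow_half {x y : ℝ} (hx : 0 ≤ x) (hy : 0 ≤ y) (k : ℕ)
    (hxy : y ≤ x ^ ((k : ℝ) / 2)) : y ^ 2 ≤ x ^ k := by
  rw [rpow_div_two_eq_sqrt _ hx, rpow_natCast] at hxy
  calc y ^ 2 ≤ (√x ^ k) ^ 2 := pow_le_pow_left₀ hy hxy 2
    _ = x ^ k := by rw [← pow_mul, mul_comm, pow_mul, sq_sqrt hx]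

end

/-- Any algorithm distinguishing deterministic `k`-th order Markov sources
from an unbiased memoryless source with success probability at least `2/3` on both must
read `Ω(σ^{k/2})` characters: if it reads `m ≤ σ^{k/2}/10` characters, it cannot both
answer "memoryless" with probability at least `2/3` on uniform input and answer "Markov"
with probability at least `2/3` (i.e. "memoryless" with probability at most `1/3`) on
every string generated by a deterministic `k`-th order Markov source. -/
theorem no_fast_distinguisher {A : Type*} [Fintype A] {σ m k : ℕ}
    (hσ : Fintype.card A = σ) (hσ2 : 2 ≤ σ)
    (hm : (m : ℝ) ≤ (σ : ℝ) ^ ((k : ℝ) / 2) / 10)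
    (alg : (Fin m → A) → ℝ) (h01 : ∀ x, 0 ≤ alg x ∧ alg x ≤ 1) :
    ¬ ((2 / 3 ≤ (1 / (Fintype.card (Fin m → A) : ℝ)) * ∑ x : Fin m → A, alg x)
        ∧ ∀ s : Fin m → A, GenByMarkov k s → alg s ≤ 1 / 3) := by
  rintro ⟨havg, hmarkov⟩
  have : Nonempty A := Fintype.card_pos_iff.mp (by omega)
  have hmany := card_le_two_mul_card_of_average_ge alg {s | HasMatch k s} (fun x => (h01 x).2)
    (fun s hs => hmarkov s (genByMarkov_of_not_hasMatch (by simpa using hs))) havg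
  have hfew : (#{s : Fin m → A | HasMatch k s} : ℝ) * σ ^ k ≤ m * (m + 1) * σ ^ m := by
    exact_mod_cast hσ ▸ card_hasMatch_mul_le
  have hm2 : (10 * m : ℝ) ^ 2 ≤ σ ^ k :=
    sq_le_pow_of_le_rpow_half (Nat.cast_nonneg σ) (by positivity) k (by linarith)
  have hm1 : (m : ℝ) ≤ m ^ 2 := by exact_mod_cast Nat.le_self_pow two_ne_zero m
  rw [Fintype.card_fun, Fintype.card_fin, hσ, Nat.cast_pow] at hmany
  have hσpos : (0 : ℝ) < σ := by exact_mod_cast (by omega : 0 < σ)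
  have hσm : (0 : ℝ) < σ ^ m := pow_pos hσpos m
  have hσk : (0 : ℝ) < σ ^ k := pow_pos hσpos k
  nlinarith [mul_le_mul_of_nonneg_right hmany hσk.le]

end
end

section
/- If k ≥ (1+ε)·log_σ n and λ = λ(n) = o(n^ε), then for a uniformly random σ-ary string s of length n, E[λ·n·H_k(s)] = o(n·log σ); in particular E[λ·n·H_k(s) + o(n log σ)] = o(n log σ), which is asymptotically smaller than the Θ(n log σ) expected bits needed to store s. -/
open scoped Classical
open Finset Real Filter

noncomputable section

/-! Writing `s_α` for the context multisets, `n·H_k(s) = ∑_α |s_α|·H_0(s_α)` and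
`|s_α|·H_0(s_α) ≤ |s_α|·log₂|s_α| ≤ |s_α|(|s_α| - 1)/ln 2`, so `n·H_k(s)` is at most `1/ln 2`
times the number of ordered pairs of distinct positions followed by the same length-`k` context.
Two fixed distinct windows of length `k` agree for exactly a `σ^{-k}` fraction of the strings
(the later window is pinned letter by letter), hence `E[n·H_k] ≤ n²/(σ^k ln 2) ≤ n^{1-ε}/ln 2`
and `E[λ·n·H_k] = o(n^ε · n^{1-ε}) = o(n)`. -/

section Counting

variable {ι A : Type*} [Fintype A]

theorem card_filter_apply_eq_mul_card (S : Finset (ι → A)) {p q : ι} (hpq : p ≠ q)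
    (hS : ∀ s ∈ S, ∀ a, Function.update s p a ∈ S) :
    #{s ∈ S | s p = s q} * Fintype.card A = #S := by
  rw [← card_univ, ← card_product]
  refine card_nbij' (fun x => Function.update x.1 p x.2) (fun s => (Function.update s p (s q), s p))
    ?_ ?_ ?_ ?_
  · rintro ⟨s, a⟩ h
    simp only [coe_product, Set.mem_prod, coe_filter, Set.mem_ofPred_eq] at h
    exact hS s h.1.1 a
  · intro s hs
    simp only [coe_product, Set.mem_prod, coe_filter, Set.mem_ofPred_eq, Function.update_self,
      Function.update_of_ne hpq.symm]
    exact ⟨⟨hS s hs _, trivial⟩, mem_univ _⟩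
  · rintro ⟨s, a⟩ h
    simp only [coe_product, Set.mem_prod, coe_filter, Set.mem_ofPred_eq] at h
    simp [Function.update_of_ne hpq.symm, ← h.1.2]
  · intro s _
    simp

/-- Each new constraint `s (u t) = s (v t)` pins the coordinate `v t`, which no earlier
constraint mentions, and so divides the count by `|A|`. -/
theorem card_filter_forall_apply_eq_mul_pow [Fintype ι] (u v : ℕ → ι) (k : ℕ)
    (hfresh : ∀ t < k, ∀ t' ≤ t, v t ≠ u t' ∧ (t' < t → v t ≠ v t')) :
    #{s : ι → A | ∀ t < k, s (u t) = s (v t)} * Fintype.card A ^ k =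
      Fintype.card A ^ Fintype.card ι := by
  induction k with
  | zero => simp
  | succ k ih =>
    have hsucc : ({s : ι → A | ∀ t < k + 1, s (u t) = s (v t)} : Finset _) =
        {s ∈ ({s : ι → A | ∀ t < k, s (u t) = s (v t)} : Finset _) | s (v k) = s (u k)} := by
      ext s
      simp only [mem_filter, mem_univ, true_and, Nat.lt_succ_iff_lt_or_eq]
      constructor
      · intro h
        exact ⟨fun t ht => h t (.inl ht), (h k (.inr rfl)).symm⟩
      · rintro ⟨h, hk⟩ t (ht | rfl)
        exacts [h t ht, hk.symm]
    have hinv : ∀ s ∈ ({s : ι → A | ∀ t < k, s (u t) = s (v t)} : Finset _), ∀ a,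
        Function.update s (v k) a ∈ ({s : ι → A | ∀ t < k, s (u t) = s (v t)} : Finset _) := by
      intro s hs a
      simp only [mem_filter, mem_univ, true_and] at hs ⊢
      intro t ht
      have h := hfresh k (by omega) t ht.le
      rw [Function.update_of_ne (h.1).symm, Function.update_of_ne (h.2 ht).symm, hs t ht]
    rw [hsucc, pow_succ, ← mul_assoc, mul_right_comm,
      card_filter_apply_eq_mul_card _ (hfresh k (by omega) k le_rfl).1 hinv]
    exact ih fun t ht => hfresh t (by omega)

end Counting

section Contexts

variable {A : Type*} {n : ℕ}

/-- Position `i + t`, clamped to the last position exactly as in `ctxF`. -/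
def clampedPos (i : Fin n) (t : ℕ) : Fin n :=
  ⟨min (i + t) (n - 1), by have := i.isLt; omega⟩

theorem clampedPos_val {i : Fin n} {t : ℕ} (h : i + t < n) : (clampedPos i t : ℕ) = i + t := by
  simp only [clampedPos]
  omega

def contextAt (k : ℕ) (s : Fin n → A) (i : Fin n) : Fin k → A :=
  fun t => s (clampedPos i t)

def occurrences [Fintype A] (k : ℕ) (s : Fin n → A) (α : Fin k → A) : Finset (Fin n) :=
  {i | i + k < n ∧ contextAt k s i = α}

def contextCollisions (k : ℕ) (s : Fin n → A) : Finset (Fin n × Fin n) :=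
  {p | p.1 ≠ p.2 ∧ p.1 + k < n ∧ p.2 + k < n ∧ contextAt k s p.1 = contextAt k s p.2}

variable [Fintype A]

theorem card_ctxF (k : ℕ) (s : Fin n → A) (α : Fin k → A) :
    Multiset.card (ctxF k s α) = #(occurrences k s α) := by
  rw [ctxF, Multiset.card_map, occurrences, ← card_val]
  simp only [contextAt, funext_iff]
  rfl

theorem card_contextCollisions (k : ℕ) (s : Fin n → A) :
    #(contextCollisions k s) =
      ∑ α : Fin k → A, (#(occurrences k s α) * #(occurrences k s α) - #(occurrences k s α)) := by
  rw [card_eq_sum_card_fiberwise (f := fun p => contextAt k s p.1) (t := univ)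
    fun _ _ => mem_univ _]
  refine sum_congr rfl fun α _ => ?_
  rw [← offDiag_card]
  congr 1
  ext ⟨i, j⟩
  simp only [contextCollisions, occurrences, mem_filter, mem_offDiag, mem_univ, true_and]
  constructor
  · rintro ⟨⟨hne, hi, hj, heq⟩, rfl⟩
    exact ⟨⟨hi, rfl⟩, ⟨hj, heq.symm⟩, hne⟩
  · rintro ⟨⟨hi, rfl⟩, ⟨hj, heq⟩, hne⟩
    exact ⟨⟨hne, hi, hj, heq.symm⟩, rfl⟩

theorem card_contextAt_eq_mul_pow {k : ℕ} {i j : Fin n} (hij : i < j) (hj : j + k ≤ n) :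
    #{s : Fin n → A | contextAt k s i = contextAt k s j} * Fintype.card A ^ k =
      Fintype.card A ^ n := by
  have hval : ∀ t < k, ((clampedPos i t : ℕ) = i + t) ∧ ((clampedPos j t : ℕ) = j + t) :=
    fun t ht => ⟨clampedPos_val (by omega), clampedPos_val (by omega)⟩
  have hfresh : ∀ t < k, ∀ t' ≤ t,
      clampedPos j t ≠ clampedPos i t' ∧ (t' < t → clampedPos j t ≠ clampedPos j t') := by
    intro t ht t' ht'
    simp only [ne_eq, Fin.ext_iff, (hval t ht).2, (hval t' (by omega)).1, (hval t' (by omega)).2]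
    omega
  convert card_filter_forall_apply_eq_mul_pow (A := A) _ _ k hfresh using 3
  · ext s
    simp only [mem_filter, mem_univ, true_and, contextAt, funext_iff, Fin.forall_iff]
  · simp

theorem card_filter_mem_contextCollisions_mul_pow_le (k : ℕ) (p : Fin n × Fin n) :
    #{s : Fin n → A | p ∈ contextCollisions k s} * Fintype.card A ^ k ≤ Fintype.card A ^ n := by
  by_cases hp : p.1 ≠ p.2 ∧ p.1 + k < n ∧ p.2 + k < n
  · obtain ⟨hne, h1, h2⟩ := hp
    have hstrings : ({s : Fin n → A | p ∈ contextCollisions k s} : Finset _) =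
        ({s | contextAt k s p.1 = contextAt k s p.2} : Finset (Fin n → A)) := by
      ext s
      simp [contextCollisions, hne, h1, h2]
    rw [hstrings]
    rcases lt_or_gt_of_ne hne with hlt | hgt
    · exact (card_contextAt_eq_mul_pow hlt h2.le).le
    · simp_rw [eq_comm (a := contextAt k _ p.1)]
      exact (card_contextAt_eq_mul_pow hgt h1.le).le
  · have hempty : ({s : Fin n → A | p ∈ contextCollisions k s} : Finset _) = ∅ := by
      ext s
      simp only [contextCollisions, mem_filter, mem_univ, true_and, notMem_empty, iff_false]
      tauto
    simp [hempty]

theorem sum_card_contextCollisions_mul_pow_le (k : ℕ) :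
    (∑ s : Fin n → A, #(contextCollisions k s)) * Fintype.card A ^ k ≤
      n * n * Fintype.card A ^ n := by
  have hdouble := sum_card_bipartiteAbove_eq_sum_card_bipartiteBelow (s := univ) (t := univ)
    (r := fun (s : Fin n → A) p => p ∈ contextCollisions k s)
  simp only [bipartiteAbove, bipartiteBelow, filter_mem_eq_inter, univ_inter] at hdouble
  calc (∑ s : Fin n → A, #(contextCollisions k s)) * Fintype.card A ^ k
      = ∑ p : Fin n × Fin n, #{s : Fin n → A | p ∈ contextCollisions k s} * Fintype.card A ^ k := by
        rw [hdouble, sum_mul]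
    _ ≤ ∑ _p : Fin n × Fin n, Fintype.card A ^ n :=
        sum_le_sum fun p _ => card_filter_mem_contextCollisions_mul_pow_le k p
    _ = n * n * Fintype.card A ^ n := by simp

end Contexts

section Entropy

variable {A : Type*} [Fintype A]

theorem H0M_nonneg (t : Multiset A) : 0 ≤ H0M t := by
  refine mul_nonneg (by positivity) (sum_nonneg fun a _ => ?_)
  rcases (t.count a).eq_zero_or_pos with h | h
  · simp [h]
  · refine mul_nonneg (Nat.cast_nonneg _) (logb_nonneg one_lt_two ?_)
    rw [one_le_div (by exact_mod_cast h)]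
    exact_mod_cast Multiset.count_le_card a t

theorem HkF_nonneg {n : ℕ} (k : ℕ) (s : Fin n → A) : 0 ≤ HkF k s :=
  mul_nonneg (by positivity) (sum_nonneg fun _ _ => mul_nonneg (Nat.cast_nonneg _) (H0M_nonneg _))

/-- Each letter costs at most `log₂ |t|` bits, and `log x ≤ x - 1`. -/
theorem card_mul_H0M_le (t : Multiset A) :
    Multiset.card t * H0M t ≤ Multiset.card t * (Multiset.card t - 1) / Real.log 2 := by
  set m : ℝ := (Multiset.card t : ℝ)
  rcases eq_or_ne m 0 with hm | hm
  · simp [hm]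
  have hterm : ∀ a, (t.count a : ℝ) * logb 2 (m / t.count a) ≤ t.count a * logb 2 m := by
    intro a
    rcases (t.count a).eq_zero_or_pos with h | h
    · simp [h]
    have h1 : (1 : ℝ) ≤ t.count a := by exact_mod_cast h
    have hlog : logb 2 (m / t.count a) ≤ logb 2 m :=
      logb_le_logb_of_le one_lt_two (by positivity) (div_le_self (by positivity) h1)
    exact mul_le_mul_of_nonneg_left hlog (by positivity)
  calc m * H0M t = ∑ a, (t.count a : ℝ) * logb 2 (m / t.count a) := by
        rw [H0M, ← mul_assoc, mul_one_div_cancel hm, one_mul]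
    _ ≤ ∑ a, (t.count a : ℝ) * logb 2 m := sum_le_sum fun a _ => hterm a
    _ = m * (Real.log m / Real.log 2) := by
        rw [← sum_mul, logb]
        exact_mod_cast congrArg (fun x : ℕ => (x : ℝ) * (Real.log m / Real.log 2))
          (Multiset.sum_count_eq_card fun a _ => mem_univ a)
    _ ≤ m * (m - 1) / Real.log 2 := by
        rw [← mul_div_assoc]
        gcongr
        exact Real.log_le_sub_one_of_pos (by positivity)

theorem natCast_mul_HkF_le {n : ℕ} (k : ℕ) (s : Fin n → A) :
    n * HkF k s ≤ #(contextCollisions k s) / Real.log 2 := by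
  have hsum : ∑ α : Fin k → A, (Multiset.card (ctxF k s α) : ℝ) * H0M (ctxF k s α) ≤
      #(contextCollisions k s) / Real.log 2 := by
    rw [card_contextCollisions, Nat.cast_sum, sum_div]
    refine sum_le_sum fun α _ => ?_
    have hcast : ((#(occurrences k s α) * #(occurrences k s α) - #(occurrences k s α) : ℕ) : ℝ) =
        #(occurrences k s α) * (#(occurrences k s α) - 1) := by
      rw [Nat.cast_sub (Nat.le_mul_self _)]
      push_cast
      ring
    rw [hcast, ← card_ctxF]
    exact card_mul_H0M_le _
  rcases eq_or_ne (n : ℝ) 0 with hn | hn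
  · rw [hn, zero_mul]
    positivity
  · rwa [HkF, ← mul_assoc, mul_one_div_cancel hn, one_mul]

end Entropy

theorem expected_natCast_mul_HkF_le {A : Type*} [Fintype A] [Nonempty A] (n k : ℕ) :
    (1 / Fintype.card (Fin n → A) : ℝ) * ∑ s : Fin n → A, (n : ℝ) * HkF k s ≤
      n ^ 2 / (Fintype.card A ^ k * Real.log 2) := by
  have hσ : (0 : ℝ) < Fintype.card A := by exact_mod_cast Fintype.card_pos
  have hcoll : ∑ s : Fin n → A, (#(contextCollisions k s) : ℝ) ≤
      n ^ 2 * Fintype.card A ^ n / Fintype.card A ^ k := by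
    rw [le_div_iff₀ (by positivity), sq]
    exact_mod_cast sum_card_contextCollisions_mul_pow_le k
  calc (1 / Fintype.card (Fin n → A) : ℝ) * ∑ s : Fin n → A, (n : ℝ) * HkF k s
      ≤ (1 / Fintype.card A ^ n) *
          ∑ s : Fin n → A, (#(contextCollisions k s) : ℝ) / Real.log 2 := by
        rw [Fintype.card_fun, Fintype.card_fin, Nat.cast_pow]
        gcongr with s
        exact natCast_mul_HkF_le k s
    _ ≤ (1 / Fintype.card A ^ n) *
          (n ^ 2 * Fintype.card A ^ n / Fintype.card A ^ k / Real.log 2) := by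
        rw [← sum_div]
        gcongr
    _ = n ^ 2 / (Fintype.card A ^ k * Real.log 2) := by
        field_simp

theorem expected_natCast_mul_HkF_isBigO {A : Type*} [Fintype A] (hA : 1 < (Fintype.card A : ℝ))
    {ε : ℝ} (k : ℕ → ℕ) (hk : ∀ n : ℕ, (1 + ε) * logb (Fintype.card A) n ≤ k n) :
    (fun n : ℕ => (1 / Fintype.card (Fin n → A) : ℝ) * ∑ s : Fin n → A, (n : ℝ) * HkF (k n) s)
      =O[atTop] fun n : ℕ => (n : ℝ) ^ (1 - ε) := by
  have : Nonempty A := Fintype.card_pos_iff.mp (by exact_mod_cast one_pos.trans hA)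
  refine .of_bound (1 / Real.log 2) ?_
  filter_upwards [eventually_ge_atTop 1] with n hn
  have hn0 : (0 : ℝ) < n := by exact_mod_cast hn
  have hpow : (n : ℝ) ^ (1 + ε) ≤ (Fintype.card A : ℝ) ^ k n := by
    rw [← rpow_natCast, ← logb_le_iff_le_rpow hA (by positivity),
      logb_rpow_eq_mul_logb_of_pos hn0]
    exact hk n
  rw [norm_of_nonneg (mul_nonneg (by positivity)
    (sum_nonneg fun s _ => mul_nonneg n.cast_nonneg (HkF_nonneg _ s))),
    norm_of_nonneg (by positivity)]
  calc _ ≤ n ^ 2 / (Fintype.card A ^ k n * Real.log 2) := expected_natCast_mul_HkF_le n (k n)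
    _ ≤ n ^ 2 / (n ^ (1 + ε) * Real.log 2) := by gcongr
    _ = 1 / Real.log 2 * n ^ (1 - ε) := by
      rw [show (1 : ℝ) - ε = 2 - (1 + ε) by ring, rpow_sub hn0, rpow_two]
      ring

theorem expected_lambda_n_Hk_littleO_general {A : Type*} [Fintype A] {σ : ℕ}
    (hσ : Fintype.card A = σ) (hσ2 : 2 ≤ σ) {ε : ℝ}
    (k : ℕ → ℕ) (lam : ℕ → ℝ)
    (hk : ∀ n : ℕ, (1 + ε) * Real.logb σ n ≤ (k n : ℝ))
    (hlam : lam =o[Filter.atTop] fun n : ℕ => (n : ℝ) ^ ε) :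
    (fun n : ℕ => (1 / (Fintype.card (Fin n → A) : ℝ)) *
        ∑ s : Fin n → A, lam n * (n : ℝ) * HkF (k n) s)
      =o[Filter.atTop] fun n : ℕ => (n : ℝ) * Real.logb 2 σ := by
  subst hσ
  have hA : (1 : ℝ) < Fintype.card A := by exact_mod_cast hσ2
  have hsplit : (fun n : ℕ => (1 / (Fintype.card (Fin n → A) : ℝ)) *
      ∑ s : Fin n → A, lam n * (n : ℝ) * HkF (k n) s) = fun n => lam n *
        ((1 / Fintype.card (Fin n → A) : ℝ) * ∑ s : Fin n → A, (n : ℝ) * HkF (k n) s) := by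
    ext n
    simp only [mul_sum]
    exact sum_congr rfl fun s _ => by ring
  have hn : (fun n : ℕ => (n : ℝ) ^ ε * (n : ℝ) ^ (1 - ε)) =ᶠ[atTop] fun n => (n : ℝ) := by
    filter_upwards [eventually_ge_atTop 1] with n hn
    rw [← rpow_add (by positivity), add_sub_cancel, rpow_one]
  rw [hsplit]
  refine (hlam.mul_isBigO (expected_natCast_mul_HkF_isBigO hA k hk)).trans_isBigO
    (hn.trans_isBigO ?_)
  simpa only [mul_comm] using
    Asymptotics.isBigO_self_const_mul (logb_pos one_lt_two hA).ne' (fun n : ℕ => (n : ℝ)) atTop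

/-- If `k(n) ≥ (1+ε)·log_σ n` and `λ(n) = o(n^ε)`, then for uniformly random
σ-ary strings of length `n`, `E[λ(n)·n·H_{k(n)}(s)] = o(n·log σ)`. -/
theorem expected_lambda_n_Hk_littleO {A : Type*} [Fintype A] {σ : ℕ}
    (hσ : Fintype.card A = σ) (hσ2 : 2 ≤ σ) {ε : ℝ} (hε : 0 < ε)
    (k : ℕ → ℕ) (lam : ℕ → ℝ)
    (hk : ∀ n : ℕ, (1 + ε) * Real.logb σ n ≤ (k n : ℝ))
    (hlam : lam =o[Filter.atTop] fun n : ℕ => (n : ℝ) ^ ε) :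
    (fun n : ℕ => (1 / (Fintype.card (Fin n → A) : ℝ)) *
        ∑ s : Fin n → A, lam n * (n : ℝ) * HkF (k n) s)
      =o[Filter.atTop] fun n : ℕ => (n : ℝ) * Real.logb 2 σ :=
  expected_lambda_n_Hk_littleO_general hσ hσ2 k lam hk hlam

end
end
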